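/- Let P be a finite Eulerian binomial poset of rank n with factorial function B(k) = k! for 1 ≤ k ≤ n. Then P is isomorphic to the boolean lattice B_n. -/

import Mathlib

open scoped Classical

/-! ## Basic notions: saturated chains, rank functions, Euler–Poincaré, Eulerian,
binomial / Sheffer / triangular posets. -/

/-- A saturated (maximal) chain from `x` to `y` in a poset, encoded as a list. -/
def IsSatChain {α : Type*} [PartialOrder α] (x y : α) (l : List α) : Prop :=
  l.Chain' (· ⋖ ·) ∧ l.head? = some x ∧ l.getLast? = some y

/-- The number of maximal chains of the interval `[x, y]`. -/
noncomputable def chainCount {α : Type*} [PartialOrder α] (x y : α) : ℕ :=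
  Nat.card {l : List α // IsSatChain x y l}

/-- `rk` is a rank function for a graded poset with `⊥`:
the bottom has rank `0` and ranks increase by one across cover relations. -/
def IsRankFunction {α : Type*} [PartialOrder α] [OrderBot α] (rk : α → ℕ) : Prop :=
  rk ⊥ = 0 ∧ ∀ x y : α, x ⋖ y → rk y = rk x + 1

/-- The interval `[x, y]` satisfies the Euler–Poincaré relation: it has as many elements
of even rank as of odd rank. -/
def EulerPoincare {α : Type*} [Fintype α] [PartialOrder α] (rk : α → ℕ) (x y : α) : Prop :=
  (Finset.univ.filter fun z => x ≤ z ∧ z ≤ y ∧ Even (rk z)).card =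
    (Finset.univ.filter fun z => x ≤ z ∧ z ≤ y ∧ ¬ Even (rk z)).card

/-- A graded poset is Eulerian if every non-singleton interval satisfies
the Euler–Poincaré relation. -/
def IsEulerian {α : Type*} [Fintype α] [PartialOrder α] (rk : α → ℕ) : Prop :=
  ∀ x y : α, x < y → EulerPoincare rk x y

/-- A binomial poset: the number of maximal chains of an interval depends only
on its length, via the factorial function `B`. -/
def IsBinomial {α : Type*} [PartialOrder α] (rk : α → ℕ) (B : ℕ → ℕ) : Prop :=
  ∀ x y : α, x ≤ y → chainCount x y = B (rk y - rk x)

/-- A Sheffer poset: Sheffer intervals `[⊥, y]` have `D (ρ y)` maximal chains and binomial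
intervals `[x, y]` with `x ≠ ⊥` have `B (ρ y - ρ x)` maximal chains. -/
def IsSheffer {α : Type*} [PartialOrder α] [OrderBot α] (rk : α → ℕ) (B D : ℕ → ℕ) : Prop :=
  (∀ y : α, chainCount ⊥ y = D (rk y)) ∧
    (∀ x y : α, x ≠ ⊥ → x ≤ y → chainCount x y = B (rk y - rk x))

/-- A triangular poset: the number of maximal chains of `[x, y]` depends only on
`ρ x` and `ρ y`. -/
def IsTriangular {α : Type*} [PartialOrder α] (rk : α → ℕ) (B : ℕ → ℕ → ℕ) : Prop :=
  ∀ x y : α, x ≤ y → chainCount x y = B (rk x) (rk y)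

/-! ## Constructions: summations, dual suspension, butterfly posets, polygon face lattices. -/

/-- The proper part of a bounded poset. -/
abbrev ProperPart (Q : Type*) [PartialOrder Q] [OrderBot Q] [OrderTop Q] : Type _ :=
  {x : Q // x ≠ ⊥ ∧ x ≠ ⊤}

/-- The summation `⊞_{i} Q i` of a family of bounded posets: identify all the minimal
elements and all the maximal elements of the disjoint union of the `Q i`. -/
abbrev FamSum {ι : Type*} (Q : ι → Type*) [∀ i, PartialOrder (Q i)] [∀ i, OrderBot (Q i)]
    [∀ i, OrderTop (Q i)] : Type _ :=
  WithBot (WithTop ((i : ι) × ProperPart (Q i)))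

/-- The `k`-summation `⊞^k Q`: identify all the minimal elements and all the maximal
elements of `k` disjoint copies of `Q`. -/
abbrev KSum (k : ℕ) (Q : Type*) [PartialOrder Q] [OrderBot Q] [OrderTop Q] : Type _ :=
  FamSum (fun _ : Fin k => Q)

/-- The rank function of a `k`-summation, induced by a rank function on `Q`. -/
def ksumRk {k : ℕ} {Q : Type*} [PartialOrder Q] [OrderBot Q] [OrderTop Q] (rk : Q → ℕ) :
    KSum k Q → ℕ :=
  WithBot.recBotCoe 0 (WithTop.recTopCoe (rk ⊤) (fun s => rk s.2.1))

/-- The underlying type of the dual suspension minus its bottom: two new atoms together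
with the proper (non-bottom) part of `P`. -/
def DSuspMid (P : Type*) [PartialOrder P] [OrderBot P] : Type _ :=
  Fin 2 ⊕ {x : P // x ≠ ⊥}

instance DSuspMid.partialOrder (P : Type*) [PartialOrder P] [OrderBot P] :
    PartialOrder (DSuspMid P) where
  le a b :=
    match a, b with
    | .inl i, .inl j => i = j
    | .inl _, .inr _ => True
    | .inr _, .inl _ => False
    | .inr x, .inr y => x ≤ y
  le_refl a := by cases a with
    | inl i => exact rfl
    | inr x => exact le_refl x.1
  le_trans a b c hab hbc := by
    cases a with
    | inl i =>
      cases c with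
      | inl k =>
        cases b with
        | inl j => exact Eq.trans (hab : i = j) (hbc : j = k)
        | inr y => exact ((hbc : False)).elim
      | inr z => trivial
    | inr x =>
      cases b with
      | inl j => exact ((hab : False)).elim
      | inr y =>
        cases c with
        | inl k => exact ((hbc : False)).elim
        | inr z => exact le_trans (α := {x : P // x ≠ ⊥}) hab hbc
  le_antisymm a b hab hba := by
    cases a with
    | inl i =>
      cases b with
      | inl j => exact congrArg Sum.inl (hab : _ = _)
      | inr y => exact ((hba : False)).elim
    | inr x =>
      cases b with
      | inl j => exact ((hab : False)).elim
      | inr y => exact congrArg Sum.inr (le_antisymm (α := {x : P // x ≠ ⊥}) hab hba)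

/-- The dual suspension `Σ*(P)`: insert two new elements between `⊥` and the atoms of `P`. -/
abbrev DSusp (P : Type*) [PartialOrder P] [OrderBot P] : Type _ :=
  WithBot (DSuspMid P)

/-- The rank function of the dual suspension induced by a rank function on `P`. -/
def dsuspRk {P : Type*} [PartialOrder P] [OrderBot P] (rk : P → ℕ) : DSusp P → ℕ :=
  WithBot.recBotCoe 0 (Sum.elim (fun _ => 1) (fun x => rk x.1 + 1))

noncomputable instance DSuspMid.fintype (P : Type*) [PartialOrder P] [OrderBot P] [Fintype P] :
    Fintype (DSuspMid P) := by
  unfold DSuspMid; infer_instance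

instance DSuspMid.orderTop (P : Type*) [PartialOrder P] [OrderBot P] [OrderTop P] [Nontrivial P] :
    OrderTop (DSuspMid P) where
  top := Sum.inr ⟨⊤, fun h => by
    rcases exists_pair_ne P with ⟨a, b, hab⟩
    have ha : a = ⊤ := le_antisymm le_top (h.le.trans bot_le)
    have hb : b = ⊤ := le_antisymm le_top (h.le.trans bot_le)
    exact hab (ha.trans hb.symm)⟩
  le_top a := by
    cases a with
    | inl i => trivial
    | inr x => exact le_top (α := P) (a := x.1)

/-- The butterfly poset `T n` of rank `n`: a `⊥`, a `⊤`, and two elements at each rank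
`1, …, n - 1`; any two elements at consecutive ranks are comparable. -/
def Butterfly (n : ℕ) : Type :=
  {p : Fin (n + 1) × Fin 2 // ((p.1 : ℕ) = 0 ∨ (p.1 : ℕ) = n) → p.2 = 0}

namespace Butterfly

instance (n : ℕ) : PartialOrder (Butterfly n) where
  le p q := p = q ∨ (p.1.1 : ℕ) < (q.1.1 : ℕ)
  le_refl p := Or.inl rfl
  le_trans p q r h₁ h₂ := by
    rcases h₁ with rfl | h₁
    · exact h₂
    · rcases h₂ with rfl | h₂
      · exact Or.inr h₁
      · exact Or.inr (h₁.trans h₂)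
  le_antisymm p q h₁ h₂ := by
    rcases h₁ with rfl | h₁
    · rfl
    · rcases h₂ with rfl | h₂
      · rfl
      · exact absurd (h₁.trans h₂) (lt_irrefl _)

instance (n : ℕ) : OrderBot (Butterfly n) where
  bot := ⟨(0, 0), fun _ => rfl⟩
  bot_le p := by
    rcases Nat.eq_zero_or_pos (p.1.1 : ℕ) with h | h
    · left
      apply Subtype.ext
      have h2 : p.1.2 = 0 := p.2 (Or.inl (by exact_mod_cast h))
      apply Prod.ext
      · exact (Fin.ext (by simpa using h.symm))
      · exact h2.symm
    · exact Or.inr (by simpa using h)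

instance (n : ℕ) : OrderTop (Butterfly n) where
  top := ⟨(Fin.last n, 0), fun _ => rfl⟩
  le_top p := by
    rcases eq_or_lt_of_le (Nat.lt_succ_iff.mp p.1.1.isLt) with h | h
    · left
      apply Subtype.ext
      have h2 : p.1.2 = 0 := p.2 (Or.inr h)
      apply Prod.ext
      · exact (Fin.ext (by simpa using h))
      · exact h2
    · exact Or.inr (by simpa using h)

instance (n : ℕ) : Fintype (Butterfly n) := by
  unfold Butterfly; exact Subtype.fintype _

/-- The rank function of the butterfly poset. -/
def rk {n : ℕ} (p : Butterfly n) : ℕ := p.1.1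

end Butterfly

/-- The middle levels (vertices and edges) of the face lattice of a `q`-gon:
`(0, i)` is the `i`-th vertex and `(1, i)` is the edge joining vertices `i` and `i + 1`. -/
def PolyMid (q : ℕ) : Type := Fin 2 × Fin q

instance PolyMid.partialOrder (q : ℕ) : PartialOrder (PolyMid q) where
  le a b := a = b ∨ (a.1 = 0 ∧ b.1 = 1 ∧ (a.2 = b.2 ∨ (a.2 : ℕ) = ((b.2 : ℕ) + 1) % q))
  le_refl a := Or.inl rfl
  le_trans a b c h₁ h₂ := by
    rcases h₁ with rfl | h₁
    · exact h₂
    · rcases h₂ with rfl | h₂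
      · exact Or.inr h₁
      · obtain ⟨hb, _⟩ := h₂
        rw [h₁.2.1] at hb
        exact absurd hb (by decide)
  le_antisymm a b h₁ h₂ := by
    rcases h₁ with rfl | h₁
    · rfl
    · rcases h₂ with rfl | h₂
      · rfl
      · obtain ⟨hb, _⟩ := h₂
        rw [h₁.2.1] at hb
        exact absurd hb (by decide)

/-- The face lattice `P_q` of a `q`-gon. -/
abbrev PolygonFaceLattice (q : ℕ) : Type := WithBot (WithTop (PolyMid q))

noncomputable instance ProperPart.fintype (Q : Type*) [Fintype Q] [PartialOrder Q]
    [OrderBot Q] [OrderTop Q] : Fintype (ProperPart Q) :=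
  Subtype.fintype _

instance WithTop.instFintypeOfFintype {X : Type*} [Fintype X] : Fintype (WithTop X) :=
  inferInstanceAs (Fintype (Option X))

instance WithBot.instFintypeOfFintype {X : Type*} [Fintype X] : Fintype (WithBot X) :=
  inferInstanceAs (Fintype (Option X))



/-!
When `B k = k!`, splitting the maximal chains of `[x, y]` after their first (dually, before their
last) step shows that an interval of length `m` has exactly `m` atoms and `m` coatoms. Hence in
`[⊥, t]` every atom lies below all coatoms but one and every coatom lies above all atoms but one.
Counting then shows that the coatoms of `t` not above `u ≤ t` are exactly those that miss an atom
of `u`, so `u ↦ {atoms below u}` reflects the order (descend from `⊤` along coatoms). Finally an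
atom `a ≰ u` lies below some cover of `u`, so every set of atoms is attained and `P` is the
boolean lattice on its `n` atoms.
-/

open Finset OrderDual
open scoped Nat

section SatChain

variable {α : Type*} [PartialOrder α] {x y : α} {l : List α}

theorem isSatChain_iff :
    IsSatChain x y l ↔ l.IsChain (· ⋖ ·) ∧ l.head? = some x ∧ l.getLast? = some y :=
  Iff.rfl

theorem IsSatChain.ne_nil (h : IsSatChain x y l) : l ≠ [] := by
  rintro rfl; simp [isSatChain_iff] at h

theorem IsSatChain.pairwise_lt (h : IsSatChain x y l) : l.Pairwise (· < ·) :=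
  List.isChain_iff_pairwise.1 (h.1.imp fun _ _ => CovBy.lt)

theorem IsSatChain.le (h : IsSatChain x y l) : x ≤ y := by
  obtain ⟨hc, hx, hy⟩ := h
  have hne : l ≠ [] := by rintro rfl; simp at hx
  rw [List.head?_eq_some_head hne, Option.some_inj] at hx
  rw [List.getLast?_eq_some_getLast hne, Option.some_inj] at hy
  have := List.relationReflTransGen_of_exists_isChain l (hc.imp fun _ _ => CovBy.le) hne
  rwa [Relation.reflTransGen_eq_self, hx, hy] at this

theorem isSatChain_singleton_iff {a : α} : IsSatChain x y [a] ↔ a = x ∧ a = y := by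
  simp [isSatChain_iff]

theorem isSatChain_cons_cons_iff {a b : α} :
    IsSatChain x y (a :: b :: l) ↔ a = x ∧ x ⋖ b ∧ IsSatChain b y (b :: l) := by
  simp only [isSatChain_iff, List.isChain_cons_cons, List.head?_cons, Option.some_inj]
  aesop

theorem IsSatChain.cons {z : α} (hxz : x ⋖ z) (h : IsSatChain z y l) :
    IsSatChain x y (x :: l) := by
  rcases l with _ | ⟨a, l⟩
  · exact absurd rfl h.ne_nil
  · obtain rfl : a = z := by simpa using h.2.1
    exact isSatChain_cons_cons_iff.2 ⟨rfl, hxz, h⟩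

instance [Fintype α] (x y : α) : Finite {l : List α // IsSatChain x y l} :=
  Finite.of_injective (fun l => (⟨l.1, l.2.pairwise_lt.imp ne_of_lt⟩ : {l : List α // l.Nodup}))
    fun _ _ h => Subtype.ext (congrArg Subtype.val h :)

theorem chainCount_self (x : α) : chainCount x x = 1 := by
  rw [chainCount, Nat.card_eq_one_iff_unique]
  refine ⟨⟨fun ⟨l₁, h₁⟩ ⟨l₂, h₂⟩ => ?_⟩, ⟨⟨[x], isSatChain_singleton_iff.2 ⟨rfl, rfl⟩⟩⟩⟩
  suffices ∀ l, IsSatChain x x l → l = [x] from Subtype.ext ((this l₁ h₁).trans (this l₂ h₂).symm)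
  rintro (_ | ⟨a, _ | ⟨b, l⟩⟩) h
  · exact absurd rfl h.ne_nil
  · rw [isSatChain_singleton_iff.1 h |>.1]
  · obtain ⟨-, hxb, hb⟩ := isSatChain_cons_cons_iff.1 h
    exact absurd (hxb.lt.trans_le hb.le) (lt_irrefl x)

theorem isSatChain_reverse_iff :
    IsSatChain (toDual y) (toDual x) (l.map toDual).reverse ↔ IsSatChain x y l := by
  simp [isSatChain_iff, List.isChain_reverse, List.isChain_map, List.head?_reverse,
    List.getLast?_reverse, and_comm]

theorem chainCount_toDual (x y : α) : chainCount (toDual y) (toDual x) = chainCount x y :=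
  Nat.card_congr (Equiv.subtypeEquiv
    ((Equiv.listEquivOfEquiv toDual).trans (List.reverse_involutive.toPerm _))
    fun _ => isSatChain_reverse_iff.symm).symm

end SatChain

section IntervalAtoms

variable {α : Type*} [Fintype α] [PartialOrder α] {x y : α}

noncomputable def intervalAtoms (x y : α) : Finset α := {z | x ⋖ z ∧ z ≤ y}

noncomputable def intervalCoatoms (x y : α) : Finset α := {w | x ≤ w ∧ w ⋖ y}

@[simp]
theorem mem_intervalAtoms {z : α} : z ∈ intervalAtoms x y ↔ x ⋖ z ∧ z ≤ y := by
  simp [intervalAtoms]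

@[simp]
theorem mem_intervalCoatoms {w : α} : w ∈ intervalCoatoms x y ↔ x ≤ w ∧ w ⋖ y := by
  simp [intervalCoatoms]

theorem intervalAtoms_self (x : α) : intervalAtoms x x = ∅ :=
  eq_empty_of_forall_notMem fun _ hz =>
    lt_irrefl x ((mem_intervalAtoms.1 hz).1.lt.trans_le (mem_intervalAtoms.1 hz).2)

theorem intervalAtoms_subset_intervalAtoms_right {y' : α} (h : y ≤ y') :
    intervalAtoms x y ⊆ intervalAtoms x y' := fun _ hz =>
  mem_intervalAtoms.2 ⟨(mem_intervalAtoms.1 hz).1, (mem_intervalAtoms.1 hz).2.trans h⟩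

theorem card_intervalCoatoms_eq_card_intervalAtoms_toDual :
    #(intervalCoatoms x y) = #(intervalAtoms (toDual y) (toDual x)) :=
  card_equiv toDual fun w => by simp [and_comm]

theorem chainCount_eq_sum_intervalAtoms (hxy : x < y) :
    chainCount x y = ∑ z ∈ intervalAtoms x y, chainCount z y := by
  let cons (p : Σ z : intervalAtoms x y, {l // IsSatChain z.1 y l}) : {l // IsSatChain x y l} :=
    ⟨x :: p.2.1, p.2.2.cons (mem_intervalAtoms.1 p.1.2).1⟩
  have hcons : cons.Bijective := by
    constructor
    · intro ⟨⟨z₁, _⟩, l₁, h₁⟩ ⟨⟨z₂, _⟩, l₂, h₂⟩ h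
      obtain rfl : l₁ = l₂ := (List.cons_inj_right x).1 (congrArg Subtype.val h)
      obtain rfl : z₁ = z₂ := Option.some_inj.1 (h₁.2.1.symm.trans h₂.2.1)
      rfl
    · rintro ⟨_ | ⟨a, _ | ⟨z, l⟩⟩, h⟩
      · exact absurd rfl h.ne_nil
      · obtain ⟨rfl, rfl⟩ := isSatChain_singleton_iff.1 h
        exact absurd rfl hxy.ne
      · obtain ⟨rfl, hxz, hz⟩ := isSatChain_cons_cons_iff.1 h
        exact ⟨⟨⟨z, mem_intervalAtoms.2 ⟨hxz, hz.le⟩⟩, z :: l, hz⟩, rfl⟩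
  rw [chainCount, ← Nat.card_eq_of_bijective cons hcons, Nat.card_sigma]
  exact sum_coe_sort (intervalAtoms x y) fun z => chainCount z y

theorem card_intervalAtoms_of_chainCount {m : ℕ} (hxy : x < y) (hx : chainCount x y = (m + 1)!)
    (hz : ∀ z ∈ intervalAtoms x y, chainCount z y = m !) : #(intervalAtoms x y) = m + 1 := by
  rw [chainCount_eq_sum_intervalAtoms hxy, sum_congr rfl hz, sum_const, smul_eq_mul,
    Nat.factorial_succ] at hx
  exact Nat.eq_of_mul_eq_mul_right (Nat.factorial_pos m) hx

end IntervalAtoms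

section Rank

variable {α : Type*} [Fintype α] [PartialOrder α] [OrderBot α] {rk : α → ℕ} {x y : α}

theorem IsRankFunction.strictMono (hrk : IsRankFunction rk) : StrictMono rk := by
  intro x y hxy
  induction x using WellFoundedGT.induction with
  | _ x ih =>
  obtain ⟨z, hxz, hzy⟩ := exists_covBy_le_of_lt hxy
  have hrz := hrk.2 x z hxz
  rcases hzy.eq_or_lt with rfl | hzy
  · omega
  · have := ih z hxz.lt hzy
    omega

theorem IsBinomial.to_factorial [OrderTop α] {B : ℕ → ℕ} (hrk : IsRankFunction rk)
    (hB : IsBinomial rk B) (hfact : ∀ k, 1 ≤ k → k ≤ rk ⊤ → B k = k !) :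
    IsBinomial rk Nat.factorial := by
  intro x y hxy
  rcases hxy.eq_or_lt with rfl | hlt
  · rw [chainCount_self, Nat.sub_self, Nat.factorial_zero]
  · have := hrk.strictMono hlt
    have := hrk.strictMono.monotone (le_top : y ≤ ⊤)
    rw [hB x y hxy, hfact _ (by omega) (by omega)]

end Rank

section FactorialBinomial

variable {α : Type*} [Fintype α] [PartialOrder α] [OrderBot α] {rk : α → ℕ}
  (hrk : IsRankFunction rk) (hB : IsBinomial rk Nat.factorial) {x y : α}
include hrk hB

theorem card_intervalAtoms (hxy : x ≤ y) : #(intervalAtoms x y) = rk y - rk x := by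
  rcases hxy.eq_or_lt with rfl | hlt
  · rw [intervalAtoms_self, card_empty, Nat.sub_self]
  obtain ⟨m, hm⟩ := Nat.exists_eq_add_of_lt (hrk.strictMono hlt)
  rw [show rk y - rk x = m + 1 by omega]
  refine card_intervalAtoms_of_chainCount hlt (by rw [hB x y hxy, hm]; congr 1; omega)
    fun z hz => ?_
  rw [hB z y (mem_intervalAtoms.1 hz).2, hrk.2 x z (mem_intervalAtoms.1 hz).1]
  congr 1
  omega

theorem card_intervalCoatoms (hxy : x ≤ y) : #(intervalCoatoms x y) = rk y - rk x := by
  rw [card_intervalCoatoms_eq_card_intervalAtoms_toDual]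
  rcases hxy.eq_or_lt with rfl | hlt
  · rw [intervalAtoms_self, card_empty, Nat.sub_self]
  obtain ⟨m, hm⟩ := Nat.exists_eq_add_of_lt (hrk.strictMono hlt)
  rw [show rk y - rk x = m + 1 by omega]
  refine card_intervalAtoms_of_chainCount (toDual_lt_toDual.2 hlt)
    (by rw [chainCount_toDual, hB x y hxy, hm]; congr 1; omega) fun w hw => ?_
  have hwy : ofDual w ⋖ y := toDual_covBy_toDual_iff.1 (mem_intervalAtoms.1 hw).1
  have := hrk.2 _ y hwy
  rw [← toDual_ofDual w, chainCount_toDual, hB x (ofDual w) (mem_intervalAtoms.1 hw).2]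
  congr 1
  omega

theorem card_intervalAtoms_bot (u : α) : #(intervalAtoms ⊥ u) = rk u := by
  rw [card_intervalAtoms hrk hB bot_le, hrk.1, Nat.sub_zero]

theorem card_filter_not_le_intervalCoatoms {a t : α} (ha : ⊥ ⋖ a) (hat : a ≤ t) :
    #{c ∈ intervalCoatoms ⊥ t | ¬ a ≤ c} = 1 := by
  have hsdiff :
      {c ∈ intervalCoatoms ⊥ t | ¬ a ≤ c} = intervalCoatoms ⊥ t \ intervalCoatoms a t := by
    ext c
    simp only [mem_filter, mem_sdiff, mem_intervalCoatoms, bot_le, true_and]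
    tauto
  have hsub : intervalCoatoms a t ⊆ intervalCoatoms ⊥ t := fun c hc =>
    mem_intervalCoatoms.2 ⟨bot_le, (mem_intervalCoatoms.1 hc).2⟩
  have hra : rk a = 1 := by rw [hrk.2 ⊥ a ha, hrk.1]
  have := hrk.strictMono.monotone hat
  rw [hsdiff, card_sdiff_of_subset hsub, card_intervalCoatoms hrk hB bot_le,
    card_intervalCoatoms hrk hB hat, hrk.1, hra]
  omega

theorem card_filter_not_le_intervalAtoms {c t : α} (hct : c ⋖ t) :
    #{a ∈ intervalAtoms ⊥ t | ¬ a ≤ c} = 1 := by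
  have hsdiff : {a ∈ intervalAtoms ⊥ t | ¬ a ≤ c} = intervalAtoms ⊥ t \ intervalAtoms ⊥ c := by
    ext a
    simp only [mem_filter, mem_sdiff, mem_intervalAtoms]
    constructor
    · rintro ⟨⟨ha, hat⟩, hac⟩
      exact ⟨⟨ha, hat⟩, fun h => hac h.2⟩
    · rintro ⟨⟨ha, hat⟩, hac⟩
      exact ⟨⟨ha, hat⟩, fun h => hac ⟨ha, h⟩⟩
  rw [hsdiff, card_sdiff_of_subset (intervalAtoms_subset_intervalAtoms_right hct.le),
    card_intervalAtoms_bot hrk hB, card_intervalAtoms_bot hrk hB, hrk.2 c t hct]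
  omega

theorem eq_of_not_le_of_covBy {a b c t : α} (hct : c ⋖ t) (ha : a ∈ intervalAtoms ⊥ t)
    (hb : b ∈ intervalAtoms ⊥ t) (hac : ¬ a ≤ c) (hbc : ¬ b ≤ c) : a = b :=
  card_le_one.1 (card_filter_not_le_intervalAtoms hrk hB hct).le a (mem_filter.2 ⟨ha, hac⟩) b
    (mem_filter.2 ⟨hb, hbc⟩)

theorem biUnion_filter_not_le_eq_sdiff {u t : α} (hut : u ≤ t) :
    (intervalAtoms ⊥ u).biUnion (fun a => {c ∈ intervalCoatoms ⊥ t | ¬ a ≤ c}) =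
      intervalCoatoms ⊥ t \ intervalCoatoms u t := by
  refine eq_of_subset_of_card_le (fun c hc => ?_) ?_
  · obtain ⟨a, ha, hc⟩ := mem_biUnion.1 hc
    obtain ⟨hct, hac⟩ := mem_filter.1 hc
    exact mem_sdiff.2 ⟨hct, fun huc => hac ((mem_intervalAtoms.1 ha).2.trans
      (mem_intervalCoatoms.1 huc).1)⟩
  · have hdisj : ∀ a ∈ intervalAtoms ⊥ u, ∀ b ∈ intervalAtoms ⊥ u, a ≠ b →
        Disjoint {c ∈ intervalCoatoms ⊥ t | ¬ a ≤ c} {c ∈ intervalCoatoms ⊥ t | ¬ b ≤ c} := by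
      intro a ha b hb hab
      refine disjoint_left.2 fun c hca hcb => hab ?_
      exact eq_of_not_le_of_covBy hrk hB (mem_intervalCoatoms.1 (mem_filter.1 hca).1).2
        (intervalAtoms_subset_intervalAtoms_right hut ha)
        (intervalAtoms_subset_intervalAtoms_right hut hb) (mem_filter.1 hca).2 (mem_filter.1 hcb).2
    have hone : ∀ a ∈ intervalAtoms ⊥ u, #{c ∈ intervalCoatoms ⊥ t | ¬ a ≤ c} = 1 :=
      fun a ha => card_filter_not_le_intervalCoatoms hrk hB (mem_intervalAtoms.1 ha).1
        ((mem_intervalAtoms.1 ha).2.trans hut)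
    have hsub : intervalCoatoms u t ⊆ intervalCoatoms ⊥ t := fun c hc =>
      mem_intervalCoatoms.2 ⟨bot_le, (mem_intervalCoatoms.1 hc).2⟩
    have := hrk.strictMono.monotone hut
    rw [card_biUnion hdisj, sum_congr rfl hone, card_sdiff_of_subset hsub,
      card_intervalCoatoms hrk hB bot_le, card_intervalCoatoms hrk hB hut,
      sum_const, smul_eq_mul, mul_one, card_intervalAtoms_bot hrk hB, hrk.1]
    omega

theorem le_of_intervalAtoms_subset_of_covBy {u c t : α} (hut : u ≤ t) (hct : c ⋖ t)
    (h : intervalAtoms ⊥ u ⊆ intervalAtoms ⊥ c) : u ≤ c := by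
  by_contra huc
  have hc : c ∈ intervalCoatoms ⊥ t \ intervalCoatoms u t := by simp [hct, huc]
  rw [← biUnion_filter_not_le_eq_sdiff hrk hB hut, mem_biUnion] at hc
  obtain ⟨a, ha, hac⟩ := hc
  exact (mem_filter.1 hac).2 (mem_intervalAtoms.1 (h ha)).2

theorem le_of_intervalAtoms_subset {u v t : α} (h : intervalAtoms ⊥ u ⊆ intervalAtoms ⊥ v)
    (hut : u ≤ t) (hvt : v ≤ t) : u ≤ v := by
  induction t using WellFoundedLT.induction with
  | _ t ih =>
  rcases hvt.eq_or_lt with rfl | hvt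
  · exact hut
  obtain ⟨c, hvc, hct⟩ := exists_le_covBy_of_lt hvt
  exact ih c hct.lt (le_of_intervalAtoms_subset_of_covBy hrk hB hut hct
    (h.trans (intervalAtoms_subset_intervalAtoms_right hvc))) hvc

theorem le_of_not_le_of_covBy {a c t w : α} (ha : ⊥ ⋖ a) (hat : a ≤ t) (hct : c ⋖ t)
    (hac : ¬ a ≤ c) (hwt : w ≤ t) (haw : ¬ a ≤ w) : w ≤ c := by
  refine le_of_intervalAtoms_subset_of_covBy hrk hB hwt hct fun b hb => ?_
  obtain ⟨hb, hbw⟩ := mem_intervalAtoms.1 hb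
  refine mem_intervalAtoms.2 ⟨hb, not_not.1 fun hbc => haw ?_⟩
  obtain rfl : a = b := eq_of_not_le_of_covBy hrk hB hct (mem_intervalAtoms.2 ⟨ha, hat⟩)
    (mem_intervalAtoms.2 ⟨hb, hbw.trans hwt⟩) hac hbc
  exact hbw

theorem exists_mem_intervalAtoms_ge {a u t : α} (ha : ⊥ ⋖ a) (hat : a ≤ t) (hut : u ≤ t)
    (hau : ¬ a ≤ u) : ∃ z ∈ intervalAtoms u t, a ≤ z := by
  obtain ⟨c, hc⟩ : {c ∈ intervalCoatoms ⊥ t | ¬ a ≤ c}.Nonempty := by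
    rw [← card_pos, card_filter_not_le_intervalCoatoms hrk hB ha hat]
    exact one_pos
  obtain ⟨⟨-, hct⟩, hac⟩ := mem_filter.1 hc |>.imp_left mem_intervalCoatoms.1
  have huc := le_of_not_le_of_covBy hrk hB ha hat hct hac hut hau
  by_contra! hz
  have hsub : intervalAtoms u t ⊆ intervalAtoms u c := fun z hz' =>
    mem_intervalAtoms.2 ⟨(mem_intervalAtoms.1 hz').1,
      le_of_not_le_of_covBy hrk hB ha hat hct hac (mem_intervalAtoms.1 hz').2 (hz z hz')⟩
  have hcard := card_le_card hsub
  have hrc := hrk.2 c t hct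
  have hut' := hrk.strictMono (lt_of_le_of_ne hut (by rintro rfl; exact hau hat))
  rw [card_intervalAtoms hrk hB hut, card_intervalAtoms hrk hB huc] at hcard
  omega

theorem intervalAtoms_bot_eq_insert_of_covBy {u z a : α} (huz : u ⋖ z) (ha : ⊥ ⋖ a)
    (haz : a ≤ z) (hau : ¬ a ≤ u) : intervalAtoms ⊥ z = insert a (intervalAtoms ⊥ u) := by
  refine (eq_of_subset_of_card_le (insert_subset (mem_intervalAtoms.2 ⟨ha, haz⟩)
    (intervalAtoms_subset_intervalAtoms_right huz.le)) ?_).symm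
  rw [card_insert_of_notMem fun h => hau (mem_intervalAtoms.1 h).2, card_intervalAtoms_bot hrk hB,
    card_intervalAtoms_bot hrk hB, hrk.2 u z huz]

end FactorialBinomial

noncomputable def Equiv.finsetOrderIso {ι κ : Type*} (e : ι ≃ κ) : Finset ι ≃o Finset κ where
  toEquiv := e.finsetCongr
  map_rel_iff' := by simp [Equiv.finsetCongr_apply]

section AtomsBelow

variable {α : Type*} [Fintype α] [PartialOrder α] [BoundedOrder α] {rk : α → ℕ}

noncomputable def atomsBelow (u : α) : Finset {a : α // ⊥ ⋖ a} := {a | a.1 ≤ u}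

theorem mem_atomsBelow {u : α} {a : {a : α // ⊥ ⋖ a}} :
    a ∈ atomsBelow u ↔ a.1 ∈ intervalAtoms ⊥ u := by
  simp [atomsBelow, a.2]

variable (hrk : IsRankFunction rk) (hB : IsBinomial rk Nat.factorial)
include hrk hB

theorem atomsBelow_subset_atomsBelow_iff {u v : α} : atomsBelow u ⊆ atomsBelow v ↔ u ≤ v := by
  refine ⟨fun h => le_of_intervalAtoms_subset hrk hB (fun a ha => ?_) le_top le_top,
    fun h => ?_⟩
  · let a' : {a : α // ⊥ ⋖ a} := ⟨a, (mem_intervalAtoms.1 ha).1⟩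
    exact mem_atomsBelow.1 (h (mem_atomsBelow.2 ha : a' ∈ atomsBelow u))
  · intro a ha
    exact mem_atomsBelow.2 (intervalAtoms_subset_intervalAtoms_right h (mem_atomsBelow.1 ha))

theorem atomsBelow_surjective : Function.Surjective (atomsBelow (α := α)) := by
  intro s
  induction s using Finset.induction_on with
  | empty => exact ⟨⊥, by ext a; simp [mem_atomsBelow, intervalAtoms_self]⟩
  | insert a s has ih =>
    obtain ⟨u, rfl⟩ := ih
    have hau : ¬ a.1 ≤ u := fun h => has (mem_atomsBelow.2 (mem_intervalAtoms.2 ⟨a.2, h⟩))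
    obtain ⟨z, hz, haz⟩ := exists_mem_intervalAtoms_ge hrk hB a.2 le_top le_top hau
    refine ⟨z, ext fun b => ?_⟩
    rw [mem_insert, mem_atomsBelow, mem_atomsBelow,
      intervalAtoms_bot_eq_insert_of_covBy hrk hB (mem_intervalAtoms.1 hz).1 a.2 haz hau,
      mem_insert, Subtype.ext_iff]

noncomputable def atomsBelowOrderIso : α ≃o Finset {a : α // ⊥ ⋖ a} :=
  OrderIso.ofSurjective (OrderEmbedding.ofMapLEIff atomsBelow
    fun _ _ => atomsBelow_subset_atomsBelow_iff hrk hB) (atomsBelow_surjective hrk hB)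

theorem card_atoms : Fintype.card {a : α // ⊥ ⋖ a} = rk ⊤ := by
  rw [Fintype.card_subtype, ← card_intervalAtoms_bot hrk hB ⊤]
  congr 1
  ext a
  simp

end AtomsBelow

theorem statement4_general {α : Type*} [Fintype α] [PartialOrder α] [BoundedOrder α]
    (rk : α → ℕ) (B : ℕ → ℕ) (n : ℕ) (hrk : IsRankFunction rk) (hB : IsBinomial rk B)
    (hrank : rk ⊤ = n)
    (hfact : ∀ k, 1 ≤ k → k ≤ n → B k = Nat.factorial k) :
    Nonempty (α ≃o Finset (Fin n)) := by
  subst hrank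
  have hfac := hB.to_factorial hrk hfact
  exact ⟨(atomsBelowOrderIso hrk hfac).trans
    (Fintype.equivFinOfCardEq (card_atoms hrk hfac)).finsetOrderIso⟩

/-- An Eulerian binomial poset of rank `n` with `B k = k!` is isomorphic to
the boolean lattice `B_n`. -/
theorem statement4 {α : Type*} [Fintype α] [PartialOrder α] [BoundedOrder α]
    (rk : α → ℕ) (B : ℕ → ℕ) (n : ℕ) (hrk : IsRankFunction rk) (hB : IsBinomial rk B)
    (hE : IsEulerian rk) (hrank : rk ⊤ = n)
    (hfact : ∀ k, 1 ≤ k → k ≤ n → B k = Nat.factorial k) :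
    Nonempty (α ≃o Finset (Fin n)) :=
  statement4_general rk B n hrk hB hrank hfact
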